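/- Let F be a free R-module, s ≥ 1, a_2 ∈ ⋀^2 F, and β_s ∈ ⋀^s F* with Δ(β_s) = Σ_i β_1^[i] ⊗ β_{s−1}^[i]. Then Σ_i (β_1^[i] ⌟ a_2) ⌟ β_{s−1}^[i] = −2 · (a_2 ⌟ β_s). -/

import Mathlib

open ExteriorAlgebra

noncomputable def extMap (R : Type*) [CommRing R] {M N : Type*} [AddCommGroup M] [AddCommGroup N]
    [Module R M] [Module R N] (f : M →ₗ[R] N) :
    ExteriorAlgebra R M →ₐ[R] ExteriorAlgebra R N :=
  ExteriorAlgebra.lift R ⟨(ExteriorAlgebra.ι R).comp f, fun m => by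
    simp [ExteriorAlgebra.ι_sq_zero (f m)]⟩

noncomputable def extContract (R : Type*) [CommRing R] {M : Type*} [AddCommGroup M] [Module R M] :
    ExteriorAlgebra R (Module.Dual R M) →ₐ[R] Module.End R (ExteriorAlgebra R M) :=
  ExteriorAlgebra.lift R ⟨(CliffordAlgebra.contractLeft (Q := (0 : QuadraticForm R M)) :
      Module.Dual R M →ₗ[R] Module.End R (ExteriorAlgebra R M)), fun d => by
    refine LinearMap.ext fun x => ?_
    rw [Module.End.mul_apply, LinearMap.zero_apply]
    exact CliffordAlgebra.contractLeft_contractLeft (Q := (0 : QuadraticForm R M)) (d := d) x⟩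

noncomputable def extContractD (R : Type*) [CommRing R] {M : Type*} [AddCommGroup M] [Module R M] :
    ExteriorAlgebra R M →ₐ[R] Module.End R (ExteriorAlgebra R (Module.Dual R M)) :=
  ExteriorAlgebra.lift R ⟨(CliffordAlgebra.contractLeft
      (Q := (0 : QuadraticForm R (Module.Dual R M))) :
      Module.Dual R (Module.Dual R M) →ₗ[R] _).comp (Module.Dual.eval R M), fun m => by
    refine LinearMap.ext fun x => ?_
    rw [Module.End.mul_apply, LinearMap.zero_apply, LinearMap.comp_apply]
    exact CliffordAlgebra.contractLeft_contractLeft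
      (Q := (0 : QuadraticForm R (Module.Dual R M))) (d := Module.Dual.eval R M m) x⟩

def extDeg (R : Type*) [CommRing R] {M : Type*} [AddCommGroup M] [Module R M] (i : ℕ)
    (x : ExteriorAlgebra R M) : Prop :=
  x ∈ (LinearMap.range (ExteriorAlgebra.ι R : M →ₗ[R] ExteriorAlgebra R M)) ^ i

/-! The contraction by `β_1^[i]` sends `b ∧ c` to `β_1^[i](b) c − β_1^[i](c) b`, so by the
defining property of `Δ` the left-hand side is `c ⌟ (b ⌟ β_s) − b ⌟ (c ⌟ β_s)`. Contractions by
vectors anticommute, so this is `−2 • b ⌟ (c ⌟ β_s) = −2 • (b ∧ c) ⌟ β_s`; both sides are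
additive in `a_2`, and degree-2 elements are sums of such products. -/

section Contraction

variable {R : Type*} [CommRing R] {M : Type*} [AddCommGroup M] [Module R M]

theorem extContract_ι (d : Module.Dual R M) :
    extContract R (ι R d) = CliffordAlgebra.contractLeft (Q := (0 : QuadraticForm R M)) d := by
  simp [extContract, lift_ι_apply]

theorem extContractD_ι (x : M) :
    extContractD R (ι R x) = CliffordAlgebra.contractLeft
      (Q := (0 : QuadraticForm R (Module.Dual R M))) (Module.Dual.eval R M x) := by
  simp [extContractD, lift_ι_apply]

theorem extContract_ι_ι_mul_ι (d : Module.Dual R M) (b c : M) :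
    extContract R (ι R d) (ι R b * ι R c) = d b • ι R c - d c • ι R b := by
  rw [extContract_ι, CliffordAlgebra.contractLeft_ι_mul, CliffordAlgebra.contractLeft_ι,
    ← Algebra.commutes, ← Algebra.smul_def]

theorem extContractD_ι_comm (b c : M) (β : ExteriorAlgebra R (Module.Dual R M)) :
    extContractD R (ι R c) (extContractD R (ι R b) β) =
      -extContractD R (ι R b) (extContractD R (ι R c) β) := by
  rw [extContractD_ι, extContractD_ι, CliffordAlgebra.contractLeft_comm]

@[elab_as_elim]
theorem extDeg_two_induction {P : ExteriorAlgebra R M → Prop}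
    (mul : ∀ b c : M, P (ι R b * ι R c)) (add : ∀ x y, P x → P y → P (x + y))
    {a : ExteriorAlgebra R M} (ha : extDeg R 2 a) : P a := by
  rw [extDeg, pow_two] at ha
  refine Submodule.mul_induction_on ha ?_ add
  rintro _ ⟨b, rfl⟩ _ ⟨c, rfl⟩
  exact mul b c

theorem sum_extContractD_extContract_ι_mul_ι {I : Type*} [Fintype I]
    (β : ExteriorAlgebra R (Module.Dual R M)) (β1 : I → Module.Dual R M)
    (β' : I → ExteriorAlgebra R (Module.Dual R M))
    (hΔ : ∀ b : M, extContractD R (ι R b) β = ∑ i, β1 i b • β' i) (b c : M) :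
    ∑ i, extContractD R (extContract R (ι R (β1 i)) (ι R b * ι R c)) (β' i) =
      (-2 : R) • extContractD R (ι R b * ι R c) β := by
  calc ∑ i, extContractD R (extContract R (ι R (β1 i)) (ι R b * ι R c)) (β' i)
      = extContractD R (ι R c) (∑ i, β1 i b • β' i)
          - extContractD R (ι R b) (∑ i, β1 i c • β' i) := by
        simp only [extContract_ι_ι_mul_ι, map_sub, map_smul, LinearMap.sub_apply,
          LinearMap.smul_apply, map_sum, Finset.sum_sub_distrib]
    _ = extContractD R (ι R c) (extContractD R (ι R b) β)
          - extContractD R (ι R b) (extContractD R (ι R c) β) := by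
        rw [hΔ b, hΔ c]
    _ = (-2 : R) • extContractD R (ι R b * ι R c) β := by
        rw [extContractD_ι_comm, map_mul, Module.End.mul_apply]
        module

end Contraction

/-- `hΔ` encodes `Δ(β_s) = Σ_i β_1^[i] ⊗ β_{s-1}^[i]` through its characterizing property
`b ⌟ β_s = Σ_i β_1^[i](b) β_{s-1}^[i]`. -/
theorem comul_contract_two_general (R : Type*) [CommRing R]
    (F : Type*) [AddCommGroup F] [Module R F]
    (a2 : ExteriorAlgebra R F) (ha2 : extDeg R 2 a2)
    (βs : ExteriorAlgebra R (Module.Dual R F))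
    (I : Type*) [Fintype I] (β1 : I → Module.Dual R F)
    (βs1 : I → ExteriorAlgebra R (Module.Dual R F))
    (hΔ : ∀ b : F, extContractD R (ExteriorAlgebra.ι R b) βs =
      ∑ i, (β1 i b) • βs1 i) :
    ∑ i, extContractD R (extContract R (ExteriorAlgebra.ι R (β1 i)) a2) (βs1 i) =
      (-2 : R) • extContractD R a2 βs := by
  refine extDeg_two_induction (sum_extContractD_extContract_ι_mul_ι βs β1 βs1 hΔ) ?_ ha2
  intro x y hx hy
  simp only [map_add, LinearMap.add_apply, Finset.sum_add_distrib, hx, hy, smul_add]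

/-- Lemma 1.5(b).  The hypothesis `hΔ` encodes `Δ(β_s) = Σ_i β_1^[i] ⊗ β_{s-1}^[i]`
(the `(1, s-1)` component of the comultiplication) via its characterizing property.
The conclusion is `Σ_i (β_1^[i] ⌟ a_2) ⌟ β_{s-1}^[i] = -2 • (a_2 ⌟ β_s)`. -/
theorem comul_contract_two (R : Type*) [CommRing R]
    (F : Type*) [AddCommGroup F] [Module R F] [Module.Free R F] [Module.Finite R F]
    (s : ℕ) (hs : 1 ≤ s)
    (a2 : ExteriorAlgebra R F) (ha2 : extDeg R 2 a2)
    (βs : ExteriorAlgebra R (Module.Dual R F)) (hβs : extDeg R s βs)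
    (I : Type*) [Fintype I] (β1 : I → Module.Dual R F)
    (βs1 : I → ExteriorAlgebra R (Module.Dual R F))
    (hβs1 : ∀ i, extDeg R (s - 1) (βs1 i))
    (hΔ : ∀ b : F, extContractD R (ExteriorAlgebra.ι R b) βs =
      ∑ i, (β1 i b) • βs1 i) :
    ∑ i, extContractD R (extContract R (ExteriorAlgebra.ι R (β1 i)) a2) (βs1 i) =
      (-2 : R) • extContractD R a2 βs :=
  comul_contract_two_general R F a2 ha2 βs I β1 βs1 hΔ
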